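/- arXiv:1303.2834 — 6 statements merged into one kernel-verified Lean document; each statement's English description precedes it below -/
import Mathlib

section
/- For any two unit vectors a, b in a d-dimensional complex Hilbert space and any orthonormal basis φ₁,...,φ_d, there exists an index i such that |⟨φᵢ|a⟩| ≥ |⟨a|b⟩|/d and |⟨φᵢ|b⟩| ≥ |⟨a|b⟩|/d. -/
open scoped InnerProductSpace

theorem stmt0 {d : ℕ} (hd : 1 ≤ d)
    (a b : EuclideanSpace ℂ (Fin d)) (ha : ‖a‖ = 1) (hb : ‖b‖ = 1)
    (φ : OrthonormalBasis (Fin d) ℂ (EuclideanSpace ℂ (Fin d))) :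
    ∃ i : Fin d, ‖⟪φ i, a⟫_ℂ‖ ≥ ‖⟪a, b⟫_ℂ‖ / d ∧ ‖⟪φ i, b⟫_ℂ‖ ≥ ‖⟪a, b⟫_ℂ‖ / d := by
  set c := ‖⟪a, b⟫_ℂ‖ with hc
  have hd' : (0:ℝ) < d := by exact_mod_cast hd
  rcases le_or_gt c 0 with h0 | h0
  · refine ⟨⟨0, hd⟩, ?_, ?_⟩ <;>
    · have : c / d ≤ 0 := div_nonpos_of_nonpos_of_nonneg h0 hd'.le
      exact le_trans this (norm_nonneg _)
  · -- key sum identity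
    have hsum : c ≤ ∑ i : Fin d, ‖⟪φ i, a⟫_ℂ‖ * ‖⟪φ i, b⟫_ℂ‖ := by
      calc c = ‖∑ i : Fin d, ⟪a, φ i⟫_ℂ * ⟪φ i, b⟫_ℂ‖ := by
              rw [hc, φ.sum_inner_mul_inner a b]
        _ ≤ ∑ i : Fin d, ‖⟪a, φ i⟫_ℂ * ⟪φ i, b⟫_ℂ‖ := norm_sum_le _ _
        _ = ∑ i : Fin d, ‖⟪φ i, a⟫_ℂ‖ * ‖⟪φ i, b⟫_ℂ‖ := by
              refine Finset.sum_congr rfl fun i _ => ?_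
              rw [norm_mul, ← inner_conj_symm (φ i) a, RCLike.norm_conj]
    by_contra hcon
    push_neg at hcon
    have hlt : ∀ i : Fin d, ‖⟪φ i, a⟫_ℂ‖ * ‖⟪φ i, b⟫_ℂ‖ < c / d := by
      intro i
      rcases lt_or_ge ‖⟪φ i, a⟫_ℂ‖ (c / d) with h2 | hge
      · calc ‖⟪φ i, a⟫_ℂ‖ * ‖⟪φ i, b⟫_ℂ‖ ≤ ‖⟪φ i, a⟫_ℂ‖ * 1 := by
              have := norm_inner_le_norm (𝕜 := ℂ) (φ i) b
              simp only [φ.orthonormal.1 i, hb, one_mul] at this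
              exact mul_le_mul_of_nonneg_left this (norm_nonneg _)
          _ = ‖⟪φ i, a⟫_ℂ‖ := mul_one _
          _ < c / d := h2
      · have h := hcon i hge
        calc ‖⟪φ i, a⟫_ℂ‖ * ‖⟪φ i, b⟫_ℂ‖ ≤ 1 * ‖⟪φ i, b⟫_ℂ‖ := by
              have := norm_inner_le_norm (𝕜 := ℂ) (φ i) a
              simp only [φ.orthonormal.1 i, ha, one_mul] at this
              exact mul_le_mul_of_nonneg_right this (norm_nonneg _)
          _ = ‖⟪φ i, b⟫_ℂ‖ := one_mul _
          _ < c / d := h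
    have : ∑ i : Fin d, ‖⟪φ i, a⟫_ℂ‖ * ‖⟪φ i, b⟫_ℂ‖ < ∑ _i : Fin d, c / d := by
      refine Finset.sum_lt_sum_of_nonempty ?_ fun i _ => hlt i
      exact Finset.univ_nonempty_iff.2 ⟨⟨0, hd⟩⟩
    simp only [Finset.sum_const, Finset.card_univ, Fintype.card_fin, nsmul_eq_mul] at this
    rw [mul_div_cancel₀ _ (ne_of_gt hd')] at this
    linarith
end

section
/- For unit vectors ψ, φ in a complex Hilbert space, the function dist(ψ, φ) = (2/π)·arccos(|⟨ψ|φ⟩|) satisfies the triangle inequality: dist(ψ, φ) ≤ dist(ψ, λ) + dist(λ, φ) for any unit vector λ. -/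
open scoped InnerProductSpace

lemma my_arccos_anti {x y : ℝ} (h : x ≤ y) : Real.arccos y ≤ Real.arccos x := by
  simp only [Real.arccos_eq_pi_div_two_sub_arcsin]
  linarith [Real.monotone_arcsin h]

lemma aux_arccos (a b c : ℝ) (ha0 : 0 ≤ a) (ha1 : a ≤ 1) (hb0 : 0 ≤ b) (hb1 : b ≤ 1)
    (hc0 : 0 ≤ c) (hc1 : c ≤ 1)
    (h : a * b - Real.sqrt (1 - a ^ 2) * Real.sqrt (1 - b ^ 2) ≤ c) :
    Real.arccos c ≤ Real.arccos a + Real.arccos b := by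
  by_cases hcase : Real.pi / 2 ≤ Real.arccos a + Real.arccos b
  · exact le_trans ((Real.arccos_le_pi_div_two).mpr hc0) hcase
  · push_neg at hcase
    have h1 : Real.cos (Real.arccos a + Real.arccos b)
        = a * b - Real.sqrt (1 - a ^ 2) * Real.sqrt (1 - b ^ 2) := by
      rw [Real.cos_add, Real.cos_arccos (by linarith) ha1, Real.cos_arccos (by linarith) hb1,
        Real.sin_arccos, Real.sin_arccos]
    have h2 : Real.arccos c ≤ Real.arccos (Real.cos (Real.arccos a + Real.arccos b)) := by
      apply my_arccos_anti
      rw [h1]; exact h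
    rwa [Real.arccos_cos (add_nonneg (Real.arccos_nonneg _) (Real.arccos_nonneg _))
      (le_trans hcase.le (by linarith [Real.pi_pos]))] at h2

theorem stmt1 {H : Type*} [NormedAddCommGroup H] [InnerProductSpace ℂ H] [CompleteSpace H]
    (ψ φ lam : H) (hψ : ‖ψ‖ = 1) (hφ : ‖φ‖ = 1) (hlam : ‖lam‖ = 1) :
    (2 / Real.pi) * Real.arccos ‖⟪ψ, φ⟫_ℂ‖ ≤
      (2 / Real.pi) * Real.arccos ‖⟪ψ, lam⟫_ℂ‖ + (2 / Real.pi) * Real.arccos ‖⟪lam, φ⟫_ℂ‖ := by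
  set u := ⟪ψ, lam⟫_ℂ with hu
  set v := ⟪lam, φ⟫_ℂ with hv
  set w := ⟪ψ, φ⟫_ℂ with hw
  have hu1 : ‖u‖ ≤ 1 := by
    calc ‖u‖ ≤ ‖ψ‖ * ‖lam‖ := norm_inner_le_norm _ _
    _ = 1 := by rw [hψ, hlam]; ring
  have hv1 : ‖v‖ ≤ 1 := by
    calc ‖v‖ ≤ ‖lam‖ * ‖φ‖ := norm_inner_le_norm _ _
    _ = 1 := by rw [hlam, hφ]; ring
  have hw1 : ‖w‖ ≤ 1 := by
    calc ‖w‖ ≤ ‖ψ‖ * ‖φ‖ := norm_inner_le_norm _ _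
    _ = 1 := by rw [hψ, hφ]; ring
  set ψ' := ψ - ⟪lam, ψ⟫_ℂ • lam with hψ'
  set φ' := φ - ⟪lam, φ⟫_ℂ • lam with hφ'
  have hll : ⟪lam, lam⟫_ℂ = 1 := by
    rw [inner_self_eq_norm_sq_to_K, hlam]; norm_num
  have hψψ : ⟪ψ, ψ⟫_ℂ = 1 := by
    rw [inner_self_eq_norm_sq_to_K, hψ]; norm_num
  have hφφ : ⟪φ, φ⟫_ℂ = 1 := by
    rw [inner_self_eq_norm_sq_to_K, hφ]; norm_num
  have hsplit : w = u * v + ⟪ψ', φ'⟫_ℂ := by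
    simp only [hψ', hφ', inner_sub_sub_self, inner_sub_left, inner_sub_right, inner_smul_left,
      inner_smul_right, hll, mul_one]
    rw [hw, hu, hv, ← inner_conj_symm ψ lam]
    ring_nf
  have hinnψ : ⟪ψ', ψ'⟫_ℂ = 1 - ((‖u‖ ^ 2 : ℝ) : ℂ) := by
    have hc : (starRingEnd ℂ) u * u = ((‖u‖ ^ 2 : ℝ) : ℂ) := by
      rw [RCLike.conj_mul]; norm_cast
    simp only [hψ', inner_sub_sub_self, inner_smul_left, inner_smul_right, hll, mul_one, hψψ]
    rw [show ⟪lam, ψ⟫_ℂ = (starRingEnd ℂ) u from (inner_conj_symm lam ψ).symm]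
    simp only [Complex.conj_conj]
    linear_combination -hc
  have hinnφ : ⟪φ', φ'⟫_ℂ = 1 - ((‖v‖ ^ 2 : ℝ) : ℂ) := by
    have hc : (starRingEnd ℂ) v * v = ((‖v‖ ^ 2 : ℝ) : ℂ) := by
      rw [RCLike.conj_mul]; norm_cast
    simp only [hφ', inner_sub_sub_self, inner_smul_left, inner_smul_right, hll, mul_one, hφφ]
    rw [show ⟪φ, lam⟫_ℂ = (starRingEnd ℂ) v from (inner_conj_symm φ lam).symm]
    linear_combination -hc
  have hnψ' : ‖ψ'‖ = Real.sqrt (1 - ‖u‖ ^ 2) := by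
    have hsq' : ‖ψ'‖ ^ 2 = 1 - ‖u‖ ^ 2 := by
      have h0 := inner_self_eq_norm_sq (𝕜 := ℂ) ψ'
      rw [hinnψ] at h0
      simpa [← Complex.ofReal_pow] using h0.symm
    rw [← hsq', Real.sqrt_sq (norm_nonneg _)]
  have hnφ' : ‖φ'‖ = Real.sqrt (1 - ‖v‖ ^ 2) := by
    have hsq' : ‖φ'‖ ^ 2 = 1 - ‖v‖ ^ 2 := by
      have h0 := inner_self_eq_norm_sq (𝕜 := ℂ) φ'
      rw [hinnφ] at h0
      simpa [← Complex.ofReal_pow] using h0.symm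
    rw [← hsq', Real.sqrt_sq (norm_nonneg _)]
  have hkey : ‖u‖ * ‖v‖ - Real.sqrt (1 - ‖u‖ ^ 2) * Real.sqrt (1 - ‖v‖ ^ 2) ≤ ‖w‖ := by
    have h1 : ‖⟪ψ', φ'⟫_ℂ‖ ≤ Real.sqrt (1 - ‖u‖ ^ 2) * Real.sqrt (1 - ‖v‖ ^ 2) := by
      rw [← hnψ', ← hnφ']; exact norm_inner_le_norm _ _
    have h2 : ‖u * v‖ - ‖⟪ψ', φ'⟫_ℂ‖ ≤ ‖w‖ := by
      rw [hsplit]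
      simpa [sub_neg_eq_add] using norm_sub_norm_le (u * v) (-(⟪ψ', φ'⟫_ℂ))
    rw [norm_mul] at h2
    linarith
  have hmain := aux_arccos ‖u‖ ‖v‖ ‖w‖ (norm_nonneg _) hu1 (norm_nonneg _) hv1
    (norm_nonneg _) hw1 hkey
  have hpi : 0 ≤ 2 / Real.pi := by positivity
  calc (2 / Real.pi) * Real.arccos ‖w‖ ≤ (2 / Real.pi) * (Real.arccos ‖u‖ + Real.arccos ‖v‖) :=
        mul_le_mul_of_nonneg_left hmain hpi
  _ = _ := by ring
end

section
/- Let d ≥ 3 and define u₁,...,u_d in ℂ^d as in the construction (with a = sqrt(d/(2(d-1)²)), b = sqrt((d-2)/(4(d-1))); for 1 ≤ i ≤ d-2, uᵢ = Σ_{j≠i} a·φⱼ + i·b·φ_{i+1} − i·b·φ_{i+2}; u_{d-1} = Σ_{j≠d-1} a·φⱼ + i·b·φ_d − i·b·φ₁; u_d = Σ_{j≠d} a·φⱼ + b·φ₁ − b·φ₂). Let α = (1/√d)·Σⱼ φⱼ and define tᵢ = uᵢ − ⟨α|uᵢ⟩·α. Then t₁,...,t_d are linearly independent over ℝ (viewing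 ℂ^d as a real vector space). -/
open scoped InnerProductSpace

noncomputable def uu (d : ℕ) (i : Fin d) : EuclideanSpace ℂ (Fin d) :=
  let a : ℂ := (Real.sqrt ((d : ℝ) / (2 * ((d : ℝ) - 1) ^ 2)) : ℝ)
  let b : ℂ := (Real.sqrt (((d : ℝ) - 2) / (4 * ((d : ℝ) - 1))) : ℝ)
  WithLp.toLp 2 fun j =>
    (if j = i then 0 else a) +
    (if (i : ℕ) + 3 ≤ d then
       (if (j : ℕ) = (i : ℕ) + 1 then Complex.I * b else 0) +
       (if (j : ℕ) = (i : ℕ) + 2 then -(Complex.I * b) else 0)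
     else if (i : ℕ) = d - 2 then
       (if (j : ℕ) = d - 1 then Complex.I * b else 0) +
       (if (j : ℕ) = 0 then -(Complex.I * b) else 0)
     else
       (if (j : ℕ) = 0 then b else 0) + (if (j : ℕ) = 1 then -b else 0))

noncomputable def alph (d : ℕ) : EuclideanSpace ℂ (Fin d) :=
  WithLp.toLp 2 fun _ => ((1 / Real.sqrt d : ℝ) : ℂ)

/-!
The vector `alph d` is real, and every `uu d i` has coordinate sum `(d - 1) a`, so the
projection `⟪alph d, uu d i⟫ • alph d` is the real constant vector with entries `(d - 1) a / d`.
Hence the imaginary parts of the `tᵢ` are those of the `uᵢ`, namely `b (φᵢ₊₁ - φᵢ₊₂)` cyclically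
for `i < d` and `0` for `i = d`. For a vanishing real combination `∑ gᵢ tᵢ`, the imaginary parts
of coordinates `2, …, d` force `g₁ = ⋯ = g_{d-1} = 0` one after the other, and then the real part
of the first coordinate, `g_d (a + b - (d - 1) a / d)`, forces `g_d = 0`.
-/

open Finset

theorem Fin.sum_ite_val_eq {M : Type*} [AddCommMonoid M] {d k : ℕ} (hk : k < d)
    (f : Fin d → M) : ∑ i : Fin d, (if (i : ℕ) = k then f i else 0) = f ⟨k, hk⟩ := by
  simpa [Fin.ext_iff] using sum_ite_eq' univ (⟨k, hk⟩ : Fin d) f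

theorem inner_alph_smul_alph_apply (d : ℕ) (v : EuclideanSpace ℂ (Fin d)) (j : Fin d) :
    (⟪alph d, v⟫_ℂ • alph d) j = (∑ k, v k) / d := by
  have hsq : ((1 / Real.sqrt d : ℝ) : ℂ) * ((1 / Real.sqrt d : ℝ) : ℂ) = 1 / d := by
    rw [← Complex.ofReal_mul, div_mul_div_comm, one_mul, Real.mul_self_sqrt (Nat.cast_nonneg d)]
    push_cast
    rfl
  simp only [PiLp.smul_apply, PiLp.inner_apply, alph, RCLike.inner_apply, Complex.conj_ofReal,
    smul_eq_mul, ← sum_mul]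
  rw [mul_assoc, hsq, mul_one_div]

noncomputable def uuA (d : ℕ) : ℝ := Real.sqrt ((d : ℝ) / (2 * ((d : ℝ) - 1) ^ 2))

noncomputable def uuB (d : ℕ) : ℝ := Real.sqrt (((d : ℝ) - 2) / (4 * ((d : ℝ) - 1)))

theorem uuB_pos {d : ℕ} (hd : 3 ≤ d) : 0 < uuB d := by
  have : (3 : ℝ) ≤ d := by exact_mod_cast hd
  exact Real.sqrt_pos.2 (div_pos (by linarith) (by linarith))

theorem sum_uu_apply {d : ℕ} (hd : 2 ≤ d) (i : Fin d) :
    ∑ j, uu d i j = (((d : ℝ) - 1) * uuA d : ℝ) := by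
  have hoff : ∑ j : Fin d, (if j = i then 0 else (uuA d : ℂ)) = ((d : ℂ) - 1) * uuA d := by
    simp [sum_ite, filter_ne', Nat.cast_sub (show 1 ≤ d by omega)]
  simp only [uu, WithLp.ofLp_toLp, sum_add_distrib]
  rw [← uuA, hoff]
  have := i.2
  split_ifs
  · simp only [sum_add_distrib, Fin.sum_ite_val_eq (show (i : ℕ) + 1 < d by omega),
      Fin.sum_ite_val_eq (show (i : ℕ) + 2 < d by omega)]
    push_cast; ring
  · simp only [sum_add_distrib, Fin.sum_ite_val_eq (show d - 1 < d by omega),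
      Fin.sum_ite_val_eq (show 0 < d by omega)]
    push_cast; ring
  · simp only [sum_add_distrib, Fin.sum_ite_val_eq (show 0 < d by omega),
      Fin.sum_ite_val_eq (show 1 < d by omega)]
    push_cast; ring

theorem uu_sub_inner_alph_smul_alph_apply {d : ℕ} (hd : 2 ≤ d) (i j : Fin d) :
    (uu d i - ⟪alph d, uu d i⟫_ℂ • alph d) j = uu d i j - ((((d : ℝ) - 1) * uuA d / d : ℝ) : ℂ) := by
  rw [PiLp.sub_apply, inner_alph_smul_alph_apply, sum_uu_apply hd]
  push_cast
  rfl

-- The wrap-around term `-i b φ₁` of `u_{d-1}` only meets the first coordinate, excluded here.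
theorem im_uu_apply_succ {d n : ℕ} (hn : n + 1 < d) (k : Fin d) :
    (uu d k ⟨n + 1, hn⟩).im
      = (if (k : ℕ) = n then uuB d else 0) - (if (k : ℕ) + 1 = n then uuB d else 0) := by
  have := k.2
  simp only [uu, uuB, WithLp.ofLp_toLp, Complex.add_im, apply_ite Complex.im, Complex.ofReal_im,
    Complex.zero_im, Complex.neg_im, Complex.mul_im, Complex.I_re, Complex.I_im,
    Complex.ofReal_re, zero_mul, one_mul, zero_add, add_zero, neg_zero, ite_self]
  split_ifs <;> first | ring1 | (exfalso; omega)

theorem re_uu_last_zero {d : ℕ} (hd : 2 ≤ d) :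
    (uu d ⟨d - 1, by omega⟩ ⟨0, by omega⟩).re = uuA d + uuB d := by
  simp only [uu, uuA, uuB, WithLp.ofLp_toLp, Complex.add_re, apply_ite Complex.re,
    Complex.ofReal_re, Complex.zero_re, Complex.neg_re, Complex.mul_re, Complex.I_re,
    Complex.I_im, Complex.ofReal_im, zero_mul, mul_zero, zero_sub, neg_zero, Fin.mk.injEq]
  split_ifs <;> first | ring1 | (exfalso; omega)

theorem re_uu_last_zero_sub_pos {d : ℕ} (hd : 3 ≤ d) :
    0 < uuA d + uuB d - ((d : ℝ) - 1) * uuA d / d := by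
  have hd' : (0 : ℝ) < d := by positivity
  have : 0 ≤ uuA d / d := div_nonneg (Real.sqrt_nonneg _) hd'.le
  have := uuB_pos hd
  have : ((d : ℝ) - 1) * uuA d / d = uuA d - uuA d / d := by field_simp
  linarith

theorem eq_zero_of_sum_mul_im_uu_apply_eq_zero {d : ℕ} (hd : 3 ≤ d) {g : Fin d → ℝ}
    (h : ∀ j, ∑ i, g i * (uu d i j).im = 0) (n : ℕ) (hn : n + 1 < d) :
    g ⟨n, by omega⟩ = 0 := by
  induction n using Nat.strong_induction_on with
  | _ n ih =>
  have hprev : ∑ i : Fin d, (if (i : ℕ) + 1 = n then g i * uuB d else 0) = 0 :=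
    sum_eq_zero fun i _ => by
      split_ifs with hi
      · rw [show g i = 0 from ih i (by omega) (by omega), zero_mul]
      · rfl
  have hcoord := h ⟨n + 1, hn⟩
  simp only [im_uu_apply_succ hn, mul_sub, mul_ite, mul_zero, sum_sub_distrib,
    Fin.sum_ite_val_eq (show n < d by omega), hprev, sub_zero] at hcoord
  exact (mul_eq_zero.1 hcoord).resolve_right (uuB_pos hd).ne'

theorem stmt5 {d : ℕ} (hd : 3 ≤ d) :
    LinearIndependent ℝ (fun i : Fin d => uu d i - ⟪alph d, uu d i⟫_ℂ • alph d) := by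
  set c : ℝ := ((d : ℝ) - 1) * uuA d / d
  rw [Fintype.linearIndependent_iff]
  intro g hg
  have hcoord : ∀ j, ∑ i, g i • (uu d i j - (c : ℂ)) = 0 := fun j => by
    simpa only [WithLp.ofLp_sum, Finset.sum_apply, PiLp.smul_apply, PiLp.zero_apply,
      uu_sub_inner_alph_smul_alph_apply (by omega : 2 ≤ d)] using congrArg (fun v => v j) hg
  have hinit : ∀ n (hn : n + 1 < d), g ⟨n, by omega⟩ = 0 :=
    eq_zero_of_sum_mul_im_uu_apply_eq_zero hd fun j => by
      simpa using congrArg Complex.im (hcoord j)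
  have hlast : g ⟨d - 1, by omega⟩ = 0 := by
    have h0 := congrArg Complex.re (hcoord ⟨0, by omega⟩)
    rw [Complex.re_sum, sum_eq_single ⟨d - 1, by omega⟩] at h0
    · simp only [Complex.smul_re, Complex.sub_re, re_uu_last_zero (by omega : 2 ≤ d),
        Complex.ofReal_re, smul_eq_mul] at h0
      exact (mul_eq_zero.1 h0).resolve_right (re_uu_last_zero_sub_pos hd).ne'
    · intro i _ hi
      have := Fin.val_ne_of_ne hi
      rw [show g i = 0 from hinit i (by simp only at this; omega), zero_smul, Complex.zero_re]
    · simp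
  intro i
  by_cases hi : (i : ℕ) + 1 < d
  · exact hinit i hi
  · rwa [show i = ⟨d - 1, by omega⟩ from Fin.ext (by simp only; omega)]
end

section
/- For complex numbers a, b, c with a ≠ 0 and b ≠ 0, there exists a function δ(k) > 0 such that whenever |b|, |c| ≤ k for a fixed k and |a| < δ(k), the equation b·conj(a)·(1+|x|²) + c − x = 0 has a solution x ∈ ℂ. More precisely: if 4·|b·conj(a)|·(|b·conj(a)|·(1+|c|²) + |c|) < 1, then there exists x ∈ ℂ with b·conj(a)·(1+|x|²) + c − x = 0. -/
/-! The substitution `t = 1 + ‖x‖²` turns the equation into `x = c + t • v` with `t` a zero of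
`f t = 1 + ‖c + t • v‖² - t`. Now `f 0 = 1 + ‖c‖² > 0`, and the triangle inequality gives
`f (2 (1 + ‖c‖²)) ≤ (1 + ‖c‖²) (4 ‖v‖ (‖v‖ (1 + ‖c‖²) + ‖c‖) - 1) < 0`, so the intermediate value
theorem supplies the zero. -/

theorem exists_eq_add_one_add_norm_sq_smul {E : Type*} [NormedAddCommGroup E] [NormedSpace ℝ E]
    (c v : E) (hsmall : 4 * ‖v‖ * (‖v‖ * (1 + ‖c‖ ^ 2) + ‖c‖) < 1) :
    ∃ x : E, x = c + (1 + ‖x‖ ^ 2) • v := by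
  set C := 1 + ‖c‖ ^ 2 with hC
  set f : ℝ → ℝ := fun t ↦ 1 + ‖c + t • v‖ ^ 2 - t with hf
  have hf_cont : Continuous f := by fun_prop
  have hf_zero : 0 ≤ f 0 := by simp only [hf, zero_smul, add_zero, sub_zero]; positivity
  have hnorm : ‖c + (2 * C) • v‖ ≤ ‖c‖ + 2 * C * ‖v‖ := by
    calc ‖c + (2 * C) • v‖ ≤ ‖c‖ + ‖(2 * C) • v‖ := norm_add_le _ _
      _ = ‖c‖ + 2 * C * ‖v‖ := by rw [norm_smul, Real.norm_of_nonneg (by positivity)]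
  have hf_two_C : f (2 * C) ≤ 0 := by
    calc f (2 * C) ≤ 1 + (‖c‖ + 2 * C * ‖v‖) ^ 2 - 2 * C := by
          simp only [hf]; gcongr
      _ = C * (4 * ‖v‖ * (‖v‖ * C + ‖c‖) - 1) := by rw [hC]; ring
      _ ≤ 0 := mul_nonpos_of_nonneg_of_nonpos (by positivity) (by linarith)
  obtain ⟨t, -, ht⟩ := intermediate_value_Icc' (by positivity) hf_cont.continuousOn
    ⟨hf_two_C, hf_zero⟩
  refine ⟨c + t • v, ?_⟩
  have ht' : 1 + ‖c + t • v‖ ^ 2 = t := by simp only [hf] at ht; linarith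
  rw [ht']

theorem stmt9_general (a b c : ℂ)
    (hsmall : 4 * ‖b * starRingEnd ℂ a‖ *
        (‖b * starRingEnd ℂ a‖ * (1 + ‖c‖ ^ 2) + ‖c‖) < 1) :
    ∃ x : ℂ, b * starRingEnd ℂ a * (1 + ((‖x‖ : ℝ) : ℂ) ^ 2) + c - x = 0 := by
  obtain ⟨x, hx⟩ := exists_eq_add_one_add_norm_sq_smul c _ hsmall
  refine ⟨x, ?_⟩
  rw [Complex.real_smul] at hx
  push_cast at hx
  linear_combination -hx

theorem stmt9 (a b c : ℂ) (ha : a ≠ 0) (hb : b ≠ 0)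
    (hsmall : 4 * ‖b * starRingEnd ℂ a‖ *
        (‖b * starRingEnd ℂ a‖ * (1 + ‖c‖ ^ 2) + ‖c‖) < 1) :
    ∃ x : ℂ, b * starRingEnd ℂ a * (1 + ((‖x‖ : ℝ) : ℂ) ^ 2) + c - x = 0 :=
  stmt9_general a b c hsmall
end

section
/- Suppose for every unit vector ψ ∈ ℂ^d a radius r_ψ ∈ [0,1] is assigned such that: (i) for all unit ψ, φ with ⟨ψ|φ⟩ = 0 one has r_ψ + r_φ ≤ 1, and (ii) for all unit ψ, φ with ⟨ψ|φ⟩ ≠ 0 one has r_ψ + r_φ > (2/π)·arccos(|⟨ψ|φ⟩|). If d ≥ 3, then r_ψ = 1/2 for every unit vector ψ. -/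
open scoped InnerProductSpace

lemma stmt15_limA (a : ℝ)
    (h : ∀ t : ℝ, 0 < t → t < 1 → (2 / Real.pi) * Real.arccos t ≤ a) : 1 ≤ a := by
  have hcont : Filter.Tendsto (fun t : ℝ => (2 / Real.pi) * Real.arccos t) (nhds 0) (nhds 1) := by
    have hc : Continuous (fun t : ℝ => (2 / Real.pi) * Real.arccos t) :=
      continuous_const.mul Real.continuous_arccos
    have h0 : (2 / Real.pi) * Real.arccos 0 = 1 := by
      rw [Real.arccos_zero]; field_simp
    have := hc.tendsto 0
    rwa [h0] at this
  haveI hne : (nhdsWithin (0:ℝ) (Set.Ioo 0 1)).NeBot := by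
    apply IsGLB.nhdsWithin_neBot
    · exact isGLB_Ioo one_pos
    · exact Set.nonempty_Ioo.2 one_pos
  refine le_of_tendsto (f := fun t : ℝ => (2 / Real.pi) * Real.arccos t)
    (x := nhdsWithin (0:ℝ) (Set.Ioo 0 1)) (hcont.mono_left nhdsWithin_le_nhds) ?_
  filter_upwards [self_mem_nhdsWithin] with t ht
  exact h t ht.1 ht.2

lemma stmt15_combo {d : ℕ} (u₁ u₂ : EuclideanSpace ℂ (Fin d))
    (h1 : ‖u₁‖ = 1) (h2 : ‖u₂‖ = 1) (h12 : ⟪u₁, u₂⟫_ℂ = 0)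
    (t : ℝ) (ht0 : 0 < t) (ht1 : t < 1) :
    ‖(t : ℂ) • u₁ + (Real.sqrt (1 - t^2) : ℂ) • u₂‖ = 1 ∧
    ⟪u₁, (t : ℂ) • u₁ + (Real.sqrt (1 - t^2) : ℂ) • u₂⟫_ℂ = (t : ℂ) := by
  have hs : Real.sqrt (1 - t^2) ^ 2 = 1 - t^2 := by
    rw [Real.sq_sqrt]; nlinarith
  constructor
  · have hperp : ⟪(t : ℂ) • u₁, (Real.sqrt (1 - t^2) : ℂ) • u₂⟫_ℂ = 0 := by
      rw [inner_smul_left, inner_smul_right, h12]; ring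
    have hsq := norm_add_sq_eq_norm_sq_add_norm_sq_of_inner_eq_zero _ _ hperp
    rw [norm_smul, norm_smul, h1, h2] at hsq
    simp only [mul_one, Complex.norm_real, Complex.norm_ofNat] at hsq
    rw [Real.norm_eq_abs, Real.norm_eq_abs, abs_of_pos ht0,
      abs_of_nonneg (Real.sqrt_nonneg _)] at hsq
    nlinarith [norm_nonneg ((t : ℂ) • u₁ + (Real.sqrt (1 - t^2) : ℂ) • u₂), hs, hsq]
  · rw [inner_add_right, inner_smul_right, inner_smul_right, h12,
      inner_self_eq_norm_sq_to_K, h1]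
    norm_num

lemma stmt15_pair {d : ℕ} (hd : 3 ≤ d) (ψ : EuclideanSpace ℂ (Fin d)) (hψ : ‖ψ‖ = 1) :
    ∃ e₁ e₂ : EuclideanSpace ℂ (Fin d), ‖e₁‖ = 1 ∧ ‖e₂‖ = 1 ∧
      ⟪ψ, e₁⟫_ℂ = 0 ∧ ⟪ψ, e₂⟫_ℂ = 0 ∧ ⟪e₁, e₂⟫_ℂ = 0 := by
  have hψ0 : ψ ≠ 0 := by intro h; rw [h, norm_zero] at hψ; norm_num at hψ
  have hspan : Module.finrank ℂ (ℂ ∙ ψ : Submodule ℂ (EuclideanSpace ℂ (Fin d))) = 1 :=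
    finrank_span_singleton hψ0
  have hsum := Submodule.finrank_add_finrank_orthogonal
    (K := (ℂ ∙ ψ : Submodule ℂ (EuclideanSpace ℂ (Fin d))))
  rw [hspan, finrank_euclideanSpace, Fintype.card_fin] at hsum
  have h2 : 2 ≤ Module.finrank ℂ ((ℂ ∙ ψ)ᗮ : Submodule ℂ (EuclideanSpace ℂ (Fin d))) := by omega
  let b := stdOrthonormalBasis ℂ ((ℂ ∙ ψ)ᗮ : Submodule ℂ (EuclideanSpace ℂ (Fin d)))
  let i0 : Fin (Module.finrank ℂ ((ℂ ∙ ψ)ᗮ : Submodule ℂ (EuclideanSpace ℂ (Fin d)))) :=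
    ⟨0, by omega⟩
  let i1 : Fin (Module.finrank ℂ ((ℂ ∙ ψ)ᗮ : Submodule ℂ (EuclideanSpace ℂ (Fin d)))) :=
    ⟨1, by omega⟩
  refine ⟨(b i0 : EuclideanSpace ℂ (Fin d)), (b i1 : EuclideanSpace ℂ (Fin d)), ?_, ?_, ?_, ?_, ?_⟩
  · rw [Submodule.norm_coe]; exact b.orthonormal.1 i0
  · rw [Submodule.norm_coe]; exact b.orthonormal.1 i1
  · exact (Submodule.mem_orthogonal _ _).1 (b i0).2 ψ (Submodule.mem_span_singleton_self ψ)
  · exact (Submodule.mem_orthogonal _ _).1 (b i1).2 ψ (Submodule.mem_span_singleton_self ψ)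
  · have h := b.orthonormal.2 (i := i0) (j := i1) (by simp [i0, i1])
    simp only [] at h
    rw [Submodule.coe_inner] at h
    exact h

theorem stmt15 {d : ℕ} (hd : 3 ≤ d)
    (r : {ψ : EuclideanSpace ℂ (Fin d) // ‖ψ‖ = 1} → ℝ)
    (hr01 : ∀ ψ, r ψ ∈ Set.Icc (0 : ℝ) 1)
    (horth : ∀ ψ φ : {ψ : EuclideanSpace ℂ (Fin d) // ‖ψ‖ = 1},
      ⟪(ψ : EuclideanSpace ℂ (Fin d)), (φ : EuclideanSpace ℂ (Fin d))⟫_ℂ = 0 →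
        r ψ + r φ ≤ 1)
    (hnon : ∀ ψ φ : {ψ : EuclideanSpace ℂ (Fin d) // ‖ψ‖ = 1},
      ⟪(ψ : EuclideanSpace ℂ (Fin d)), (φ : EuclideanSpace ℂ (Fin d))⟫_ℂ ≠ 0 →
        r ψ + r φ >
          (2 / Real.pi) *
            Real.arccos ‖⟪(ψ : EuclideanSpace ℂ (Fin d)), (φ : EuclideanSpace ℂ (Fin d))⟫_ℂ‖) :
    ∀ ψ, r ψ = 1 / 2 := by
  have hhalf : ∀ ψ, r ψ ≤ 1 / 2 := by
    intro ψ
    obtain ⟨e₁, e₂, he₁, he₂, hp1, hp2, h12⟩ := stmt15_pair hd ψ.1 ψ.2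
    have key : ∀ t : ℝ, 0 < t → t < 1 →
        (2 / Real.pi) * Real.arccos t ≤ (1 - r ψ) + (1 - r ψ) := by
      intro t ht0 ht1
      obtain ⟨hwnorm, hwinner⟩ := stmt15_combo e₁ e₂ he₁ he₂ h12 t ht0 ht1
      set w : {ψ : EuclideanSpace ℂ (Fin d) // ‖ψ‖ = 1} :=
        ⟨(t : ℂ) • e₁ + (Real.sqrt (1 - t^2) : ℂ) • e₂, hwnorm⟩ with hw
      have hψw : ⟪(ψ : EuclideanSpace ℂ (Fin d)), (w : EuclideanSpace ℂ (Fin d))⟫_ℂ = 0 := by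
        show ⟪ψ.1, (t : ℂ) • e₁ + (Real.sqrt (1 - t^2) : ℂ) • e₂⟫_ℂ = 0
        rw [inner_add_right, inner_smul_right, inner_smul_right, hp1, hp2]; ring
      have hA := horth ψ ⟨e₁, he₁⟩ hp1
      have hB := horth ψ w hψw
      have hC := hnon ⟨e₁, he₁⟩ w (by
        show ⟪e₁, (t : ℂ) • e₁ + (Real.sqrt (1 - t^2) : ℂ) • e₂⟫_ℂ ≠ 0
        rw [hwinner]
        exact_mod_cast Complex.ofReal_ne_zero.2 (ne_of_gt ht0))
      have hnorm : ‖⟪(e₁ : EuclideanSpace ℂ (Fin d)), (w : EuclideanSpace ℂ (Fin d))⟫_ℂ‖ = t := by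
        show ‖⟪e₁, (t : ℂ) • e₁ + (Real.sqrt (1 - t^2) : ℂ) • e₂⟫_ℂ‖ = t
        rw [hwinner, Complex.norm_real, Real.norm_eq_abs, abs_of_pos ht0]
      rw [hnorm] at hC
      linarith
    have := stmt15_limA _ key
    linarith
  intro ψ
  obtain ⟨e₁, e₂, he₁, he₂, hp1, hp2, h12⟩ := stmt15_pair hd ψ.1 ψ.2
  have key : ∀ t : ℝ, 0 < t → t < 1 →
      (2 / Real.pi) * Real.arccos t ≤ r ψ + 1 / 2 := by
    intro t ht0 ht1
    obtain ⟨hvnorm, hvinner⟩ := stmt15_combo ψ.1 e₁ ψ.2 he₁ hp1 t ht0 ht1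
    set v : {ψ : EuclideanSpace ℂ (Fin d) // ‖ψ‖ = 1} :=
      ⟨(t : ℂ) • ψ.1 + (Real.sqrt (1 - t^2) : ℂ) • e₁, hvnorm⟩ with hv
    have hC := hnon ψ v (by
      show ⟪ψ.1, (t : ℂ) • ψ.1 + (Real.sqrt (1 - t^2) : ℂ) • e₁⟫_ℂ ≠ 0
      rw [hvinner]
      exact_mod_cast Complex.ofReal_ne_zero.2 (ne_of_gt ht0))
    have hnorm : ‖⟪(ψ : EuclideanSpace ℂ (Fin d)), (v : EuclideanSpace ℂ (Fin d))⟫_ℂ‖ = t := by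
      show ‖⟪ψ.1, (t : ℂ) • ψ.1 + (Real.sqrt (1 - t^2) : ℂ) • e₁⟫_ℂ‖ = t
      rw [hvinner, Complex.norm_real, Real.norm_eq_abs, abs_of_pos ht0]
    rw [hnorm] at hC
    have := hhalf v
    linarith
  have h1 := stmt15_limA _ key
  have h2 := hhalf ψ
  linarith
end

section
/- In any ontological theory reproducing the Born rule, suppose Ψ₁, Ψ₂, Ψ₃ are unit vectors and e₁,...,e_d is an orthonormal basis such that for every i there exists j ∈ {1,2,3} with ⟨eᵢ|Ψⱼ⟩ = 0. Let S be a measurable set such that for each j = 1,2,3 there is a measure m equivalent to each μ_{Ψⱼ} restricted to S (i.e., each μ_{Ψⱼ}|_S and m|_S have the same null sets) with m(S) > 0. Then no such theory exists; i.e., the assumptions are contradictory. -/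
open MeasureTheory
open scoped InnerProductSpace

theorem stmt19 {d : ℕ} {Λ : Type*} [MeasurableSpace Λ]
    (μ : {ψ : EuclideanSpace ℂ (Fin d) // ‖ψ‖ = 1} → Measure Λ)
    [∀ ψ, IsProbabilityMeasure (μ ψ)]
    (ξ : OrthonormalBasis (Fin d) ℂ (EuclideanSpace ℂ (Fin d)) → Fin d → Λ → ℝ)
    (hmeas : ∀ M k, Measurable (ξ M k))
    (hrange : ∀ M k l, ξ M k l ∈ Set.Icc (0 : ℝ) 1)
    (hsum : ∀ M (l : Λ), ∑ k, ξ M k l = 1)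
    (hborn : ∀ ψ M k, ∫ l, ξ M k l ∂(μ ψ) =
      ‖⟪M k, (ψ : EuclideanSpace ℂ (Fin d))⟫_ℂ‖ ^ 2)
    (Ψ : Fin 3 → {ψ : EuclideanSpace ℂ (Fin d) // ‖ψ‖ = 1})
    (e : OrthonormalBasis (Fin d) ℂ (EuclideanSpace ℂ (Fin d)))
    (hperp : ∀ i : Fin d, ∃ j : Fin 3, ⟪e i, (Ψ j : EuclideanSpace ℂ (Fin d))⟫_ℂ = 0)
    (S : Set Λ) (hS : MeasurableSet S)
    (m : Measure Λ)
    (hequiv : ∀ (j : Fin 3) (A : Set Λ), MeasurableSet A → A ⊆ S →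
      (m A = 0 ↔ μ (Ψ j) A = 0))
    (hmS : 0 < m S) : False := by
  -- For each i, the "bad" set where ξ e i doesn't vanish, intersected with S
  set A : Fin d → Set Λ := fun i => S ∩ {l | ξ e i l ≠ 0} with hA
  have hAmeas : ∀ i, MeasurableSet (A i) := fun i =>
    hS.inter (((hmeas e i) (measurableSet_singleton 0)).compl)
  have hAnull : ∀ i, m (A i) = 0 := by
    intro i
    obtain ⟨j, hj⟩ := hperp i
    -- integral of ξ e i w.r.t. μ (Ψ j) is 0
    have hint : ∫ l, ξ e i l ∂(μ (Ψ j)) = 0 := by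
      rw [hborn (Ψ j) e i, hj]; simp
    have hintg : Integrable (ξ e i) (μ (Ψ j)) := by
      refine (integrable_const (1 : ℝ)).mono' (hmeas e i).aestronglyMeasurable ?_
      filter_upwards with l
      have := hrange e i l
      rw [Real.norm_eq_abs, abs_of_nonneg this.1]
      exact this.2
    have hae : ∀ᵐ l ∂(μ (Ψ j)), ξ e i l = 0 := by
      have h := (integral_eq_zero_iff_of_nonneg (fun l => (hrange e i l).1) hintg).mp hint
      filter_upwards [h] with l hl using hl
    have hμ0 : μ (Ψ j) {l | ξ e i l ≠ 0} = 0 := by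
      simpa [ae_iff] using hae
    have hμA : μ (Ψ j) (A i) = 0 :=
      measure_mono_null Set.inter_subset_right hμ0
    exact (hequiv j (A i) (hAmeas i) Set.inter_subset_left).mpr hμA
  have hUnull : m (⋃ i, A i) = 0 := by
    exact (measure_iUnion_null_iff).mpr hAnull
  have hpos : 0 < m (S \ ⋃ i, A i) := by
    have : m S ≤ m (S \ ⋃ i, A i) + m (⋃ i, A i) := by
      apply (measure_mono (Set.subset_diff_union S _)).trans (measure_union_le _ _)
    rw [hUnull, add_zero] at this
    exact lt_of_lt_of_le hmS this
  obtain ⟨l, hlS, hlU⟩ := nonempty_of_measure_ne_zero hpos.ne'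
  have hzero : ∀ i, ξ e i l = 0 := by
    intro i
    by_contra h
    exact hlU (Set.mem_iUnion.mpr ⟨i, hlS, h⟩)
  have := hsum e l
  rw [Finset.sum_eq_zero fun i _ => hzero i] at this
  exact zero_ne_one this
end
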